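/- arXiv:2507.02622 — 2 statements merged into one kernel-verified Lean document; each statement's English description precedes it below -/
import Mathlib

section
/- Let n be a natural number and b ∈ {0,1}. Let X = (X_1,...,X_n) be uniformly distributed over the set of bit strings x ∈ {0,1}^n with |x| ≡ b (mod 2), where |x| denotes the Hamming weight. Let Λ = (Λ_1,...,Λ_n) be any random variable independent of X, and let Y = (Y_1,...,Y_n) be a random variable with values in {0,1}^n such that conditional on X = x and Λ = λ, the coordinates Y_j are independent with Pr[Y_j = y_j | X = x, Λ = λ] depending only on (x_j, λ_j). Then |E[(-1)^{|X|/2 + |Y| + b/2}]| ≤ 2^{-n/2+1}. -/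
open scoped Classical
open Finset

/-- Probability of an event under a weight function on a finite sample space. -/
noncomputable def pr {Ω : Type} [Fintype Ω] (w : Ω → ℝ) (E : Ω → Prop) : ℝ :=
  ∑ ω, if E ω then w ω else 0

lemma pr_nonneg {Ω : Type} [Fintype Ω] (w : Ω → ℝ) (hw : ∀ ω, 0 ≤ w ω) (E : Ω → Prop) :
    0 ≤ pr w E :=
  Finset.sum_nonneg fun ω _ => by by_cases h : E ω <;> simp [pr, h, hw ω]

lemma pr_sum_mul {Ω A : Type} [Fintype Ω] [Fintype A] (w : Ω → ℝ) (T : Ω → A) (g : A → ℝ) :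
    ∑ a, pr w (fun ω => T ω = a) * g a = ∑ ω, w ω * g (T ω) := by
  unfold pr
  simp only [Finset.sum_mul, ite_mul, zero_mul]
  rw [Finset.sum_comm]
  refine Finset.sum_congr rfl fun ω _ => ?_
  simp

lemma pr_sum_mul3 {Ω A B C : Type} [Fintype Ω] [Fintype A] [Fintype B] [Fintype C]
    (w : Ω → ℝ) (T1 : Ω → A) (T2 : Ω → B) (T3 : Ω → C) (g : A → B → C → ℝ) :
    ∑ a, ∑ b, ∑ c, pr w (fun ω => T3 ω = c ∧ T1 ω = a ∧ T2 ω = b) * g a b c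
      = ∑ ω, w ω * g (T1 ω) (T2 ω) (T3 ω) := by
  unfold pr
  simp only [Finset.sum_mul, ite_mul, zero_mul]
  rw [Finset.sum_congr rfl fun a _ => Finset.sum_congr rfl fun b _ => Finset.sum_comm]
  rw [Finset.sum_congr rfl fun a (_ : a ∈ Finset.univ) => Finset.sum_comm]
  rw [Finset.sum_comm]
  refine Finset.sum_congr rfl fun ω _ => ?_
  simp [ite_and]

lemma cosA (s m k : ℕ) :
    Real.cos (Real.pi * ((s:ℝ)/2 + (m:ℝ) + (k:ℝ)/2))
      = (-1:ℝ)^m * Real.cos (Real.pi * ((s:ℝ)+(k:ℝ))/2) := by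
  have h : Real.pi * ((s:ℝ)/2 + (m:ℝ) + (k:ℝ)/2) = Real.pi * ((s:ℝ)+(k:ℝ))/2 + m * Real.pi := by
    ring
  rw [h, Real.cos_add_nat_mul_pi]

lemma I_pow_re (m : ℕ) : (Complex.I ^ m).re = Real.cos (Real.pi * m / 2) := by
  have hI : Complex.I = Complex.exp ((Real.pi/2 : ℝ) * Complex.I) := by
    rw [Complex.exp_mul_I]
    simp [← Complex.ofReal_cos, ← Complex.ofReal_sin, Real.cos_pi_div_two, Real.sin_pi_div_two]
  have h2 : Complex.I ^ m = Complex.exp (((Real.pi * m / 2 : ℝ) : ℂ) * Complex.I) := by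
    have : (((Real.pi * m / 2 : ℝ) : ℂ)) * Complex.I = m * (((Real.pi/2 : ℝ) : ℂ) * Complex.I) := by
      push_cast; ring
    rw [this, Complex.exp_nat_mul, ← hI]
  rw [h2, Complex.exp_mul_I]
  simp only [Complex.add_re, Complex.mul_re, Complex.I_re, Complex.I_im,
    Complex.cos_ofReal_re, Complex.sin_ofReal_im, Complex.sin_ofReal_re]
  ring

lemma key_bound (n : ℕ) (b : Fin 2) (c : Fin n → Fin 2 → ℝ) (hc : ∀ j xj, |c j xj| ≤ 1) :
    |∑ x : Fin n → Fin 2, (if (∑ j, (x j).val) % 2 = b.val then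
        Real.cos (Real.pi * (((∑ j, (x j).val : ℕ) : ℝ) + ((b.val : ℕ) : ℝ)) / 2)
          * ∏ j, c j (x j) else 0)|
      ≤ Real.sqrt 2 ^ n := by
  set F : Fin n → Fin 2 → ℂ := fun j xj => Complex.I ^ (xj.val) * (c j xj : ℂ) with hF
  set P : ℂ := ∏ j, ((c j 0 : ℂ) + Complex.I * (c j 1 : ℂ)) with hP
  have step1 : (∑ x : Fin n → Fin 2, (if (∑ j, (x j).val) % 2 = b.val then
        Real.cos (Real.pi * (((∑ j, (x j).val : ℕ) : ℝ) + ((b.val : ℕ) : ℝ)) / 2)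
          * ∏ j, c j (x j) else 0))
      = (Complex.I ^ b.val * ∑ x : Fin n → Fin 2,
          (if (∑ j, (x j).val) % 2 = b.val then ∏ j, F j (x j) else 0)).re := by
    rw [Finset.mul_sum, Complex.re_sum]
    refine Finset.sum_congr rfl fun x _ => ?_
    by_cases h : (∑ j, (x j).val) % 2 = b.val
    · simp only [h, if_true]
      have h1 : ∏ j, F j (x j) = Complex.I ^ (∑ j, (x j).val) * ((∏ j, c j (x j) : ℝ) : ℂ) := by
        simp only [hF]
        rw [Finset.prod_mul_distrib, Finset.prod_pow_eq_pow_sum, Complex.ofReal_prod]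
      rw [h1, ← mul_assoc, ← pow_add]
      have h2 : ((Complex.I ^ (b.val + ∑ j, (x j).val)) * ((∏ j, c j (x j) : ℝ) : ℂ)).re
          = (Complex.I ^ (b.val + ∑ j, (x j).val)).re * (∏ j, c j (x j)) := by
        simp only [Complex.mul_re, Complex.ofReal_re, Complex.ofReal_im, mul_zero, sub_zero]
      rw [h2, I_pow_re]
      push_cast
      ring_nf
    · simp [h]
  rw [step1]
  have step2 : (∑ x : Fin n → Fin 2,
        (if (∑ j, (x j).val) % 2 = b.val then ∏ j, F j (x j) else 0))
      = ((∏ j, (F j 0 + F j 1)) + (-1 : ℂ) ^ b.val * ∏ j, (F j 0 - F j 1)) / 2 := by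
    have e1 : ∏ j, (F j 0 + F j 1) = ∑ x : Fin n → Fin 2, ∏ j, F j (x j) := by
      rw [← Fintype.piFinset_univ, ← Finset.prod_univ_sum]
      exact Finset.prod_congr rfl fun j _ => by rw [Fin.sum_univ_two]
    have e2 : ∏ j, (F j 0 - F j 1)
        = ∑ x : Fin n → Fin 2, (-1 : ℂ) ^ (∑ j, (x j).val) * ∏ j, F j (x j) := by
      set G : Fin n → Fin 2 → ℂ := fun j xj => (-1 : ℂ) ^ (xj.val) * F j xj with hG
      have h3 : ∀ x : Fin n → Fin 2, ∏ j, G j (x j)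
          = (-1 : ℂ) ^ (∑ j, (x j).val) * ∏ j, F j (x j) := by
        intro x
        conv_lhs => rw [hG]
        rw [Finset.prod_mul_distrib, Finset.prod_pow_eq_pow_sum]
      have h4 : ∀ j : Fin n, F j 0 - F j 1 = ∑ xj : Fin 2, G j xj := by
        intro j; rw [Fin.sum_univ_two]; simp [hG]; ring
      rw [Finset.prod_congr rfl fun j _ => h4 j, Finset.prod_univ_sum, Fintype.piFinset_univ]
      exact Finset.sum_congr rfl fun x _ => h3 x
    rw [e1, e2, Finset.mul_sum, ← Finset.sum_add_distrib, Finset.sum_div]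
    refine Finset.sum_congr rfl fun x _ => ?_
    have hb : b.val < 2 := b.isLt
    by_cases h : (∑ j, (x j).val) % 2 = b.val
    · have hev : Even (b.val + ∑ j, (x j).val) := Nat.even_iff.mpr (by omega)
      have : (-1 : ℂ) ^ b.val * ((-1 : ℂ) ^ (∑ j, (x j).val) * ∏ j, F j (x j))
          = ∏ j, F j (x j) := by
        rw [← mul_assoc, ← pow_add, hev.neg_one_pow, one_mul]
      rw [if_pos h, this]
      ring
    · have hod : Odd (b.val + ∑ j, (x j).val) := Nat.odd_iff.mpr (by omega)
      have : (-1 : ℂ) ^ b.val * ((-1 : ℂ) ^ (∑ j, (x j).val) * ∏ j, F j (x j))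
          = - ∏ j, F j (x j) := by
        rw [← mul_assoc, ← pow_add, hod.neg_one_pow, neg_one_mul]
      rw [if_neg h, this]
      ring
  rw [step2]
  have e01 : ∀ j, F j 0 + F j 1 = (c j 0 : ℂ) + Complex.I * (c j 1 : ℂ) := by
    intro j; simp [hF]
  have e02 : ∀ j, F j 0 - F j 1 = (starRingEnd ℂ) ((c j 0 : ℂ) + Complex.I * (c j 1 : ℂ)) := by
    intro j; simp [hF, map_add, map_mul, Complex.conj_I, Complex.conj_ofReal]; ring
  have hP1 : ∏ j, (F j 0 + F j 1) = P := Finset.prod_congr rfl fun j _ => e01 j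
  have hP2 : ∏ j, (F j 0 - F j 1) = (starRingEnd ℂ) P := by
    rw [hP, map_prod]
    exact Finset.prod_congr rfl fun j _ => e02 j
  rw [hP1, hP2]
  have conj_eq : (-1 : ℂ) ^ b.val * (starRingEnd ℂ) P * Complex.I ^ b.val
      = (starRingEnd ℂ) (Complex.I ^ b.val * P) := by
    rw [map_mul, map_pow, Complex.conj_I]
    rw [neg_pow]
    ring
  have main : Complex.I ^ b.val * ((P + (-1 : ℂ) ^ b.val * (starRingEnd ℂ) P) / 2)
      = (((Complex.I ^ b.val * P).re : ℝ) : ℂ) := by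
    rw [show Complex.I ^ b.val * ((P + (-1 : ℂ) ^ b.val * (starRingEnd ℂ) P) / 2)
        = (Complex.I ^ b.val * P + (-1 : ℂ) ^ b.val * (starRingEnd ℂ) P * Complex.I ^ b.val) / 2
        by ring]
    rw [conj_eq, Complex.add_conj]
    push_cast
    ring
  rw [main, Complex.ofReal_re]
  have h5 : |(Complex.I ^ b.val * P).re| ≤ ‖P‖ := by
    calc |(Complex.I ^ b.val * P).re| ≤ ‖Complex.I ^ b.val * P‖ :=
          Complex.abs_re_le_norm _
    _ = ‖P‖ := by
        rw [norm_mul, norm_pow, Complex.norm_I, one_pow, one_mul]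
  refine h5.trans ?_
  rw [hP, Complex.norm_prod]
  calc ∏ j, ‖(c j 0 : ℂ) + Complex.I * (c j 1 : ℂ)‖
      ≤ ∏ _j : Fin n, Real.sqrt 2 := by
        refine Finset.prod_le_prod (fun j _ => (norm_nonneg _)) (fun j _ => ?_)
        rw [Complex.norm_def]
        have hre : ((c j 0 : ℂ) + Complex.I * (c j 1 : ℂ)).re = c j 0 := by simp
        have him : ((c j 0 : ℂ) + Complex.I * (c j 1 : ℂ)).im = c j 1 := by simp
        rw [Complex.normSq_apply, hre, him]
        refine Real.sqrt_le_sqrt ?_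
        have h0 := abs_le.mp (hc j 0)
        have h1 := abs_le.mp (hc j 1)
        nlinarith
  _ = Real.sqrt 2 ^ n := by rw [Finset.prod_const, Finset.card_univ, Fintype.card_fin]

lemma final_arith (n : ℕ) :
    ((2:ℝ)^(n-1))⁻¹ * Real.sqrt 2 ^ n ≤ (2:ℝ)^(-(n:ℝ)/2 + 1) := by
  have h2 : (0:ℝ) ≤ 2 := by norm_num
  have hs : Real.sqrt 2 ^ n = (2:ℝ) ^ ((n:ℝ)/2) := by
    rw [show Real.sqrt 2 = (2:ℝ) ^ ((1:ℝ)/2) from Real.sqrt_eq_rpow 2, ← Real.rpow_natCast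
      ((2:ℝ) ^ ((1:ℝ)/2)) n, ← Real.rpow_mul h2]
    congr 1
    ring
  have hA : ((2:ℝ)^(n-1))⁻¹ ≤ (2:ℝ) ^ ((1:ℝ) - (n:ℝ)) := by
    cases n with
    | zero => norm_num
    | succ m =>
      have : ((2:ℝ)^(m+1-1))⁻¹ = (2:ℝ) ^ (-(m:ℝ)) := by
        rw [Nat.add_sub_cancel, ← Real.rpow_natCast 2 m, ← Real.rpow_neg h2]
      rw [this]
      apply le_of_eq
      congr 1
      push_cast
      ring
  calc ((2:ℝ)^(n-1))⁻¹ * Real.sqrt 2 ^ n ≤ (2:ℝ) ^ ((1:ℝ) - (n:ℝ)) * (2:ℝ) ^ ((n:ℝ)/2) := by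
        rw [hs]
        exact mul_le_mul_of_nonneg_right hA (Real.rpow_nonneg h2 _)
  _ = (2:ℝ)^(-(n:ℝ)/2 + 1) := by
        rw [← Real.rpow_add (by norm_num : (0:ℝ) < 2)]
        congr 1
        ring

/-- A variant of Mermin's inequality (Lemma: Mermin).  `X` is uniform over bit strings of
Hamming-weight parity `b`, `Λ` is independent of `X`, and conditional on `(X, Λ)` the
coordinates of `Y` are independent with local response kernels `q j (x j) (l j)`.
Then `|E[(-1)^{|X|/2 + |Y| + b/2}]| ≤ 2^{-n/2+1}`, where `(-1)^t := cos (π t)`. -/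
theorem mermin_variant
    (n : ℕ) (b : Fin 2)
    (Ω L : Type) [Fintype Ω] [Fintype L]
    (w : Ω → ℝ) (hw : ∀ ω, 0 ≤ w ω) (hsum : ∑ ω, w ω = 1)
    (X Y : Ω → Fin n → Fin 2) (Λ : Ω → Fin n → L)
    (hX : ∀ x : Fin n → Fin 2,
      pr w (fun ω => X ω = x)
        = if (∑ j, (x j).val) % 2 = b.val then ((2:ℝ) ^ (n - 1))⁻¹ else 0)
    (hindep : ∀ (x : Fin n → Fin 2) (l : Fin n → L),
      pr w (fun ω => X ω = x ∧ Λ ω = l)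
        = pr w (fun ω => X ω = x) * pr w (fun ω => Λ ω = l))
    (q : Fin n → Fin 2 → L → Fin 2 → ℝ)
    (hq0 : ∀ j xj lj yj, 0 ≤ q j xj lj yj)
    (hq1 : ∀ j xj lj, ∑ yj, q j xj lj yj = 1)
    (hY : ∀ (x : Fin n → Fin 2) (l : Fin n → L) (y : Fin n → Fin 2),
      pr w (fun ω => Y ω = y ∧ X ω = x ∧ Λ ω = l)
        = pr w (fun ω => X ω = x ∧ Λ ω = l) * ∏ j, q j (x j) (l j) (y j)) :
    |∑ ω, w ω * Real.cos (Real.pi *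
        (((∑ j, (X ω j).val : ℕ) : ℝ) / 2 + ((∑ j, (Y ω j).val : ℕ) : ℝ)
          + ((b.val : ℕ) : ℝ) / 2))|
      ≤ (2:ℝ) ^ (-(n:ℝ)/2 + 1) := by
  have hb2 : b.val < 2 := b.isLt
  set A : ℝ := ((2:ℝ) ^ (n - 1))⁻¹ with hA0
  have hAnn : 0 ≤ A := by
    rw [hA0]; positivity
  -- the sign function
  set f : (Fin n → Fin 2) → (Fin n → Fin 2) → ℝ := fun x y =>
    Real.cos (Real.pi * (((∑ j, (x j).val : ℕ) : ℝ) / 2 + ((∑ j, (y j).val : ℕ) : ℝ)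
      + ((b.val : ℕ) : ℝ) / 2)) with hf
  -- change of variables
  have hchg : (∑ ω, w ω * Real.cos (Real.pi *
        (((∑ j, (X ω j).val : ℕ) : ℝ) / 2 + ((∑ j, (Y ω j).val : ℕ) : ℝ)
          + ((b.val : ℕ) : ℝ) / 2)))
      = ∑ x : Fin n → Fin 2, ∑ l : Fin n → L, ∑ y : Fin n → Fin 2,
          pr w (fun ω => Y ω = y ∧ X ω = x ∧ Λ ω = l) * f x y :=
    (pr_sum_mul3 w X Λ Y (fun x _l y => f x y)).symm
  rw [hchg]
  -- substitute the structure hypotheses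
  have hsubst : ∀ (x : Fin n → Fin 2) (l : Fin n → L) (y : Fin n → Fin 2),
      pr w (fun ω => Y ω = y ∧ X ω = x ∧ Λ ω = l) * f x y
        = (if (∑ j, (x j).val) % 2 = b.val then A else 0) * pr w (fun ω => Λ ω = l)
            * (∏ j, q j (x j) (l j) (y j)) * f x y := by
    intro x l y
    rw [hY, hindep, hX]
  rw [Finset.sum_congr rfl fun x _ => Finset.sum_congr rfl fun l _ =>
    Finset.sum_congr rfl fun y _ => hsubst x l y]
  rw [Finset.sum_comm]
  -- the local correlators
  set c : (Fin n → L) → Fin n → Fin 2 → ℝ := fun l j xj => q j xj (l j) 0 - q j xj (l j) 1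
    with hc0
  have hc1 : ∀ (l : Fin n → L) (j : Fin n) (xj : Fin 2), |c l j xj| ≤ 1 := by
    intro l j xj
    have h01 := hq1 j xj (l j)
    rw [Fin.sum_univ_two] at h01
    have ha := hq0 j xj (l j) 0
    have hb := hq0 j xj (l j) 1
    have hcx : c l j xj = q j xj (l j) 0 - q j xj (l j) 1 := rfl
    rw [hcx, abs_le]
    constructor <;> linarith
  -- sum over y, for each fixed x and l
  have hYsum : ∀ (l : Fin n → L) (x : Fin n → Fin 2),
      ∑ y : Fin n → Fin 2, (∏ j, q j (x j) (l j) (y j)) * (-1:ℝ) ^ (∑ j, (y j).val)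
        = ∏ j, c l j (x j) := by
    intro l x
    set G : Fin n → Fin 2 → ℝ := fun j yj => q j (x j) (l j) yj * (-1:ℝ) ^ (yj.val) with hG
    have h1 : ∀ y : Fin n → Fin 2,
        (∏ j, q j (x j) (l j) (y j)) * (-1:ℝ) ^ (∑ j, (y j).val) = ∏ j, G j (y j) := by
      intro y
      conv_rhs => rw [hG]
      rw [Finset.prod_mul_distrib, Finset.prod_pow_eq_pow_sum]
    rw [Finset.sum_congr rfl fun y _ => h1 y]
    rw [← Fintype.piFinset_univ, ← Finset.prod_univ_sum]
    refine Finset.prod_congr rfl fun j _ => ?_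
    rw [Fin.sum_univ_two]
    simp only [hG, hc0, pow_zero, pow_one, mul_one, Fin.val_zero, Fin.val_one]
    ring
  -- inner double sum for fixed l
  have hT : ∀ l : Fin n → L,
      ∑ x : Fin n → Fin 2, ∑ y : Fin n → Fin 2,
          (if (∑ j, (x j).val) % 2 = b.val then A else 0) * pr w (fun ω => Λ ω = l)
            * (∏ j, q j (x j) (l j) (y j)) * f x y
        = pr w (fun ω => Λ ω = l) * (A * ∑ x : Fin n → Fin 2,
            (if (∑ j, (x j).val) % 2 = b.val then
              Real.cos (Real.pi * (((∑ j, (x j).val : ℕ) : ℝ) + ((b.val : ℕ) : ℝ)) / 2)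
                * ∏ j, c l j (x j) else 0)) := by
    intro l
    rw [Finset.mul_sum, Finset.mul_sum]
    refine Finset.sum_congr rfl fun x _ => ?_
    have hfx : ∀ y : Fin n → Fin 2, f x y
        = (-1:ℝ) ^ (∑ j, (y j).val)
            * Real.cos (Real.pi * (((∑ j, (x j).val : ℕ) : ℝ) + ((b.val : ℕ) : ℝ)) / 2) :=
      fun y => cosA (∑ j, (x j).val) (∑ j, (y j).val) b.val
    by_cases h : (∑ j, (x j).val) % 2 = b.val
    · rw [if_pos h, if_pos h]
      have : ∑ y : Fin n → Fin 2, A * pr w (fun ω => Λ ω = l)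
            * (∏ j, q j (x j) (l j) (y j)) * f x y
          = A * pr w (fun ω => Λ ω = l)
            * Real.cos (Real.pi * (((∑ j, (x j).val : ℕ) : ℝ) + ((b.val : ℕ) : ℝ)) / 2)
            * ∑ y : Fin n → Fin 2, (∏ j, q j (x j) (l j) (y j)) * (-1:ℝ) ^ (∑ j, (y j).val) := by
        rw [Finset.mul_sum]
        refine Finset.sum_congr rfl fun y _ => ?_
        rw [hfx y]
        ring
      rw [this, hYsum l x]
      ring
    · rw [if_neg h, if_neg h]
      simp
  rw [Finset.sum_congr rfl fun l _ => hT l]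
  -- final bound
  have hL1 : ∑ l : Fin n → L, pr w (fun ω => Λ ω = l) = 1 := by
    have := pr_sum_mul w Λ (fun _ => (1:ℝ))
    simpa [hsum] using this
  calc |∑ l : Fin n → L, pr w (fun ω => Λ ω = l) * (A * ∑ x : Fin n → Fin 2,
            (if (∑ j, (x j).val) % 2 = b.val then
              Real.cos (Real.pi * (((∑ j, (x j).val : ℕ) : ℝ) + ((b.val : ℕ) : ℝ)) / 2)
                * ∏ j, c l j (x j) else 0))|
      ≤ ∑ l : Fin n → L, |pr w (fun ω => Λ ω = l) * (A * ∑ x : Fin n → Fin 2,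
            (if (∑ j, (x j).val) % 2 = b.val then
              Real.cos (Real.pi * (((∑ j, (x j).val : ℕ) : ℝ) + ((b.val : ℕ) : ℝ)) / 2)
                * ∏ j, c l j (x j) else 0))| := Finset.abs_sum_le_sum_abs _ _
  _ ≤ ∑ l : Fin n → L, pr w (fun ω => Λ ω = l) * (A * Real.sqrt 2 ^ n) := by
      refine Finset.sum_le_sum fun l _ => ?_
      rw [abs_mul, abs_mul, abs_of_nonneg (pr_nonneg w hw _), abs_of_nonneg hAnn]
      refine mul_le_mul_of_nonneg_left ?_ (pr_nonneg w hw _)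
      exact mul_le_mul_of_nonneg_left (key_bound n b (c l) (hc1 l)) hAnn
  _ = (∑ l : Fin n → L, pr w (fun ω => Λ ω = l)) * (A * Real.sqrt 2 ^ n) := by
      rw [← Finset.sum_mul]
  _ = A * Real.sqrt 2 ^ n := by rw [hL1, one_mul]
  _ ≤ (2:ℝ) ^ (-(n:ℝ)/2 + 1) := final_arith n
end

section
/- Fix b ∈ {0,1} and x_1 ∈ {0,1}. Let X'' be uniformly distributed over the set {x' ∈ {0,1}^{n-1} : |x'| ≡ x_1 (mod 2)}, let Λ'' be any random variable independent of X'', and let Y' = (Y_2,...,Y_n) satisfy the local-response condition: conditional on X'' = x' and Λ'' = λ', the Y_j are independent with distributions depending only on (x'_j, λ'_j). Then for any a, y_1 ∈ {0,1}, |Pr[(-1)^{|X''|/2 + |Y'| + x_1/2 + a + b + y_1} = 1] - 1/2| ≤ 2^{-(n-1)/2}. -/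
open scoped Classical
open Finset

namespace MerminAux

lemma Ipow (k : ℕ) : (Complex.I) ^ k = ((-1 : ℝ) ^ (k / 2) : ℝ) * Complex.I ^ (k % 2) := by
  conv_lhs => rw [← Nat.div_add_mod k 2]
  rw [pow_add, pow_mul, Complex.I_sq]
  push_cast
  ring

lemma Ipow_re (k : ℕ) : ((Complex.I) ^ k).re = if k % 2 = 0 then (-1 : ℝ) ^ (k / 2) else 0 := by
  rw [Ipow]
  rcases Nat.mod_two_eq_zero_or_one k with h | h <;>
    rcases Nat.even_or_odd (k / 2) with h2 | h2 <;>
      simp [h, h2.neg_one_pow, Complex.ext_iff]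

lemma Ipow_im (k : ℕ) : ((Complex.I) ^ k).im = if k % 2 = 1 then (-1 : ℝ) ^ (k / 2) else 0 := by
  rw [Ipow]
  rcases Nat.mod_two_eq_zero_or_one k with h | h <;>
    rcases Nat.even_or_odd (k / 2) with h2 | h2 <;>
      simp [h, h2.neg_one_pow, Complex.ext_iff]

lemma prod_sum_fn (m : ℕ) {α : Type*} [CommRing α] (f : Fin m → Fin 2 → α) :
    ∏ j, ∑ c : Fin 2, f j c = ∑ x : Fin m → Fin 2, ∏ j, f j (x j) := by
  rw [Finset.prod_univ_sum]; rw [Fintype.piFinset_univ]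

lemma key_bound (m : ℕ) (c : ℕ) (hc : c < 2) (e : Fin m → Fin 2 → ℝ)
    (he : ∀ j v, |e j v| ≤ 1) :
    |∑ x : Fin m → Fin 2, (if (∑ j, (x j).val) % 2 = c
        then ((-1:ℝ))^((∑ j, (x j).val + c)/2) * ∏ j, e j (x j) else 0)|
      ≤ Real.sqrt 2 ^ m := by
  set Z : ℂ := ∏ j, ((e j 0 : ℂ) + (e j 1 : ℂ) * Complex.I) with hZ
  have hZsum : Z = ∑ x : Fin m → Fin 2,
      Complex.I ^ (∑ j, (x j).val) * (∏ j, e j (x j) : ℝ) := by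
    have h1 : ∀ j : Fin m, ((e j 0 : ℂ) + (e j 1 : ℂ) * Complex.I)
        = ∑ v : Fin 2, Complex.I ^ (v : ℕ) * (e j v : ℂ) := by
      intro j; simp [Fin.sum_univ_two]; ring
    rw [hZ]
    simp only [h1]
    rw [prod_sum_fn]
    congr 1; funext x
    rw [Finset.prod_mul_distrib]
    congr 1
    · rw [Finset.prod_pow_eq_pow_sum]
    · push_cast; ring
  have habs : ‖Z‖ ≤ Real.sqrt 2 ^ m := by
    rw [hZ, Complex.norm_prod]
    calc ∏ j, ‖((e j 0 : ℂ) + (e j 1 : ℂ) * Complex.I)‖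
        ≤ ∏ _j : Fin m, Real.sqrt 2 := by
          apply Finset.prod_le_prod (fun j _ => norm_nonneg _)
          intro j _
          rw [Complex.norm_def, Complex.normSq_apply]
          simp only [Complex.add_re, Complex.ofReal_re, Complex.mul_re, Complex.ofReal_im,
            Complex.I_re, Complex.I_im, Complex.add_im, Complex.mul_im]
          apply Real.sqrt_le_sqrt
          ring_nf
          nlinarith [he j 0, he j 1, abs_le.1 (he j 0), abs_le.1 (he j 1),
            sq_abs (e j 0), sq_abs (e j 1), sq_nonneg (e j 0), sq_nonneg (e j 1)]
      _ = Real.sqrt 2 ^ m := by simp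
  interval_cases c
  · have : (∑ x : Fin m → Fin 2, (if (∑ j, (x j).val) % 2 = 0
        then ((-1:ℝ))^((∑ j, (x j).val + 0)/2) * ∏ j, e j (x j) else 0)) = Z.re := by
      rw [hZsum, Complex.re_sum]
      congr 1; funext x
      rw [Complex.mul_re, Complex.ofReal_re, Complex.ofReal_im, Ipow_re]
      rcases Nat.mod_two_eq_zero_or_one (∑ j, (x j).val) with h | h <;> simp [h]
    rw [this]
    exact le_trans (Complex.abs_re_le_norm Z) habs
  · have : (∑ x : Fin m → Fin 2, (if (∑ j, (x j).val) % 2 = 1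
        then ((-1:ℝ))^((∑ j, (x j).val + 1)/2) * ∏ j, e j (x j) else 0)) = -Z.im := by
      rw [hZsum, Complex.im_sum, ← Finset.sum_neg_distrib]
      congr 1; funext x
      rw [Complex.mul_im, Complex.ofReal_re, Complex.ofReal_im, Ipow_im]
      rcases Nat.mod_two_eq_zero_or_one (∑ j, (x j).val) with h | h
      · simp [h]
      · have hdiv : (∑ j, (x j).val + 1)/2 = (∑ j, (x j).val)/2 + 1 := by omega
        simp [h, hdiv, pow_succ]
    rw [this, abs_neg]
    exact le_trans (Complex.abs_im_le_norm Z) habs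

lemma swap4 {A B C D : Type} [Fintype A] [Fintype B] [Fintype C] [Fintype D]
    (F : A → B → C → D → ℝ) :
    ∑ a, ∑ b, ∑ c, ∑ d, F a b c d = ∑ d, ∑ a, ∑ b, ∑ c, F a b c d :=
  calc ∑ a, ∑ b, ∑ c, ∑ d, F a b c d
      = ∑ a, ∑ b, ∑ d, ∑ c, F a b c d :=
        Finset.sum_congr rfl (fun _ _ => Finset.sum_congr rfl (fun _ _ => Finset.sum_comm))
    _ = ∑ a, ∑ d, ∑ b, ∑ c, F a b c d :=
        Finset.sum_congr rfl (fun _ _ => Finset.sum_comm)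
    _ = ∑ d, ∑ a, ∑ b, ∑ c, F a b c d := Finset.sum_comm

lemma decomp {Ω : Type} [Fintype Ω] {m : ℕ} {L : Type} [Fintype L]
    (w : Ω → ℝ) (X Y : Ω → Fin m → Fin 2) (Λ : Ω → Fin m → L)
    (g : (Fin m → Fin 2) → (Fin m → Fin 2) → ℝ) :
    ∑ ω, w ω * g (X ω) (Y ω)
      = ∑ x : Fin m → Fin 2, ∑ l : Fin m → L, ∑ y : Fin m → Fin 2,
          pr w (fun ω => Y ω = y ∧ X ω = x ∧ Λ ω = l) * g x y := by
  unfold pr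
  simp only [Finset.sum_mul, ite_mul, zero_mul]
  rw [swap4 (fun x l y ω => if Y ω = y ∧ X ω = x ∧ Λ ω = l then w ω * g x y else 0)]
  apply Finset.sum_congr rfl
  intro ω _
  simp [ite_and, Finset.sum_ite_eq, Finset.sum_ite_eq']

end MerminAux

/-- Probability form of the `(n-1)`-party Mermin inequality with fixed offsets:
if `X''` is uniform over strings in `{0,1}^{n-1}` of Hamming-weight parity `x₁`,
`Λ''` is independent of `X''`, and `Y'` satisfies the local-response condition,
then `|Pr[(-1)^{|X''|/2 + |Y'| + x₁/2 + a + b + y₁} = 1] - 1/2| ≤ 2^{-(n-1)/2}`. -/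
theorem mermin_prob_form
    (n : ℕ) (b x₁ a y₁ : Fin 2)
    (Ω L : Type) [Fintype Ω] [Fintype L]
    (w : Ω → ℝ) (hw : ∀ ω, 0 ≤ w ω) (hsum : ∑ ω, w ω = 1)
    (X Y : Ω → Fin (n - 1) → Fin 2) (Λ : Ω → Fin (n - 1) → L)
    (hX : ∀ x : Fin (n - 1) → Fin 2,
      pr w (fun ω => X ω = x)
        = if (∑ j, (x j).val) % 2 = x₁.val then ((2:ℝ) ^ (n - 2))⁻¹ else 0)
    (hindep : ∀ (x : Fin (n - 1) → Fin 2) (l : Fin (n - 1) → L),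
      pr w (fun ω => X ω = x ∧ Λ ω = l)
        = pr w (fun ω => X ω = x) * pr w (fun ω => Λ ω = l))
    (q : Fin (n - 1) → Fin 2 → L → Fin 2 → ℝ)
    (hq0 : ∀ j xj lj yj, 0 ≤ q j xj lj yj)
    (hq1 : ∀ j xj lj, ∑ yj, q j xj lj yj = 1)
    (hY : ∀ (x : Fin (n - 1) → Fin 2) (l : Fin (n - 1) → L) (y : Fin (n - 1) → Fin 2),
      pr w (fun ω => Y ω = y ∧ X ω = x ∧ Λ ω = l)
        = pr w (fun ω => X ω = x ∧ Λ ω = l) * ∏ j, q j (x j) (l j) (y j)) :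
    |pr w (fun ω =>
        ((∑ j, (X ω j).val + x₁.val) / 2 + ∑ j, (Y ω j).val
          + a.val + b.val + y₁.val) % 2 = 0) - 1/2|
      ≤ (2:ℝ) ^ (-((n:ℝ) - 1) / 2) := by
  classical
  set P := pr w (fun ω =>
        ((∑ j, (X ω j).val + x₁.val) / 2 + ∑ j, (Y ω j).val
          + a.val + b.val + y₁.val) % 2 = 0) with hP
  have hP0 : 0 ≤ P := by
    rw [hP, pr]
    exact Finset.sum_nonneg (fun ω _ => by split; exacts [hw ω, le_refl 0])
  have hP1 : P ≤ 1 := by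
    rw [hP, pr, ← hsum]
    exact Finset.sum_le_sum (fun ω _ => by split <;> [exact le_refl _; exact hw ω])
  by_cases hn : n ≤ 1
  · have h2 : |P - 1/2| ≤ 1/2 := by rw [abs_le]; constructor <;> linarith
    refine h2.trans ?_
    have hcast : (n:ℝ) ≤ 1 := by exact_mod_cast hn
    calc (1:ℝ)/2 ≤ 1 := by norm_num
      _ = (2:ℝ) ^ (0:ℝ) := (Real.rpow_zero 2).symm
      _ ≤ (2:ℝ) ^ (-((n:ℝ) - 1) / 2) :=
          Real.rpow_le_rpow_of_exponent_le (by norm_num) (by linarith)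
  push_neg at hn
  have hn2 : n - 2 + 1 = n - 1 := by omega
  set s : (Fin (n-1) → Fin 2) → (Fin (n-1) → Fin 2) → ℕ :=
    fun x y => (∑ j, (x j).val + x₁.val) / 2 + ∑ j, (y j).val + a.val + b.val + y₁.val
    with hs
  set g : (Fin (n-1) → Fin 2) → (Fin (n-1) → Fin 2) → ℝ :=
    fun x y => if s x y % 2 = 0 then 1 else 0 with hg
  set σ : (Fin (n-1) → Fin 2) → (Fin (n-1) → Fin 2) → ℝ :=
    fun x y => (-1 : ℝ) ^ (s x y) with hσ
  have hgσ : ∀ x y, g x y = 1/2 + σ x y / 2 := by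
    intro x y
    simp only [hg, hσ]
    rcases Nat.even_or_odd (s x y) with h | h
    · norm_num [Nat.even_iff.mp h, h.neg_one_pow]
    · norm_num [Nat.odd_iff.mp h, h.neg_one_pow]
  have hPg : P = ∑ ω, w ω * g (X ω) (Y ω) := by
    rw [hP, pr]
    apply Finset.sum_congr rfl
    intro ω _
    by_cases h : ((∑ j, (X ω j).val + x₁.val) / 2 + ∑ j, (Y ω j).val
          + a.val + b.val + y₁.val) % 2 = 0 <;>
      simp [hg, hs, h]
  set p : (Fin (n-1) → Fin 2) → (Fin (n-1) → L) → (Fin (n-1) → Fin 2) → ℝ :=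
    fun x l y => pr w (fun ω => Y ω = y ∧ X ω = x ∧ Λ ω = l) with hp
  have hptot : ∑ x, ∑ l, ∑ y, p x l y = 1 := by
    have h := MerminAux.decomp w X Y Λ (fun _ _ => 1)
    simp only [mul_one] at h
    simp only [hp]
    rw [← h, hsum]
  set D : ℝ := ∑ x, ∑ l, ∑ y, p x l y * σ x y with hD
  have hPD : P - 1/2 = D / 2 := by
    have h1 : P = ∑ x, ∑ l, ∑ y, p x l y * g x y := by
      rw [hPg, MerminAux.decomp w X Y Λ g]
    have h2 : ∑ x, ∑ l, ∑ y, p x l y * g x y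
        = (∑ x, ∑ l, ∑ y, p x l y) / 2 + D / 2 := by
      rw [hD, Finset.sum_div, Finset.sum_div, ← Finset.sum_add_distrib]
      apply Finset.sum_congr rfl; intro x _
      rw [Finset.sum_div, Finset.sum_div, ← Finset.sum_add_distrib]
      apply Finset.sum_congr rfl; intro l _
      rw [Finset.sum_div, Finset.sum_div, ← Finset.sum_add_distrib]
      apply Finset.sum_congr rfl; intro y _
      rw [hgσ]; ring
    rw [h1, h2, hptot]; ring
  set e : (Fin (n-1) → L) → Fin (n-1) → Fin 2 → ℝ :=
    fun l j v => q j v (l j) 0 - q j v (l j) 1 with he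
  have heb : ∀ l j v, |e l j v| ≤ 1 := by
    intro l j v
    have h01 : q j v (l j) 0 + q j v (l j) 1 = 1 := by
      have := hq1 j v (l j); rwa [Fin.sum_univ_two] at this
    have hev : e l j v = q j v (l j) 0 - q j v (l j) 1 := rfl
    rw [hev, abs_le]
    constructor <;> nlinarith [hq0 j v (l j) 0, hq0 j v (l j) 1]
  set c0 : ℝ := (-1 : ℝ) ^ (a.val + b.val + y₁.val) with hc0
  set T : (Fin (n-1) → L) → ℝ := fun l =>
    ∑ x : Fin (n-1) → Fin 2, (if (∑ j, (x j).val) % 2 = x₁.val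
      then ((-1:ℝ))^((∑ j, (x j).val + x₁.val)/2) * ∏ j, e l j (x j) else 0) with hT
  have hxy : ∀ (x : Fin (n-1) → Fin 2) (l : Fin (n-1) → L),
      ∑ y, p x l y * σ x y
        = c0 * ((2:ℝ) ^ (n-2))⁻¹ * (pr w (fun ω => Λ ω = l) *
            (if (∑ j, (x j).val) % 2 = x₁.val
              then ((-1:ℝ))^((∑ j, (x j).val + x₁.val)/2) * ∏ j, e l j (x j) else 0)) := by
    intro x l
    have hpval : ∀ y, p x l y
        = (if (∑ j, (x j).val) % 2 = x₁.val then ((2:ℝ) ^ (n - 2))⁻¹ else 0)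
          * pr w (fun ω => Λ ω = l) * ∏ j, q j (x j) (l j) (y j) := by
      intro y
      simp only [hp]
      rw [hY, hindep, hX]
    by_cases hpar : (∑ j, (x j).val) % 2 = x₁.val
    · simp only [hpar, if_true]
      have hσval : ∀ y, σ x y = (-1:ℝ)^((∑ j, (x j).val + x₁.val)/2)
          * (-1:ℝ)^(∑ j, (y j).val) * c0 := by
        intro y
        simp only [hσ, hs, hc0, pow_add]
        ring
      have hsumy : ∑ y : Fin (n-1) → Fin 2,
          (-1:ℝ)^(∑ j, (y j).val) * ∏ j, q j (x j) (l j) (y j)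
          = ∏ j, e l j (x j) := by
        have hterm : ∀ y : Fin (n-1) → Fin 2,
            (-1:ℝ)^(∑ j, (y j).val) * ∏ j, q j (x j) (l j) (y j)
            = ∏ j, ((-1:ℝ)^((y j).val) * q j (x j) (l j) (y j)) := by
          intro y
          rw [Finset.prod_mul_distrib, Finset.prod_pow_eq_pow_sum]
        simp only [hterm]
        rw [← MerminAux.prod_sum_fn (n-1) (fun j c => ((-1:ℝ))^(c:ℕ) * q j (x j) (l j) c)]
        apply Finset.prod_congr rfl
        intro j _
        rw [Fin.sum_univ_two]
        have hev : e l j (x j) = q j (x j) (l j) 0 - q j (x j) (l j) 1 := rfl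
        rw [hev]
        norm_num [sub_eq_add_neg]
      calc ∑ y, p x l y * σ x y
          = ∑ y : Fin (n-1) → Fin 2, (((2:ℝ) ^ (n - 2))⁻¹ * pr w (fun ω => Λ ω = l)
              * ((-1:ℝ)^((∑ j, (x j).val + x₁.val)/2) * c0))
              * ((-1:ℝ)^(∑ j, (y j).val) * ∏ j, q j (x j) (l j) (y j)) := by
            apply Finset.sum_congr rfl; intro y _
            rw [hpval, hσval]
            simp only [hpar, if_true]
            ring
        _ = (((2:ℝ) ^ (n - 2))⁻¹ * pr w (fun ω => Λ ω = l)
              * ((-1:ℝ)^((∑ j, (x j).val + x₁.val)/2) * c0))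
              * ∑ y : Fin (n-1) → Fin 2, (-1:ℝ)^(∑ j, (y j).val) * ∏ j, q j (x j) (l j) (y j) := by
            rw [← Finset.mul_sum]
        _ = c0 * ((2:ℝ) ^ (n-2))⁻¹ * (pr w (fun ω => Λ ω = l)
              * ((-1:ℝ)^((∑ j, (x j).val + x₁.val)/2) * ∏ j, e l j (x j))) := by
            rw [hsumy]; ring
    · simp only [hpar, if_false]
      have hz : ∀ y, p x l y = 0 := by
        intro y; rw [hpval]; simp [hpar]
      simp [hz]
  have hDval : D = c0 * ((2:ℝ) ^ (n-2))⁻¹ *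
      ∑ l, pr w (fun ω => Λ ω = l) * T l := by
    rw [hD]
    calc ∑ x, ∑ l, ∑ y, p x l y * σ x y
        = ∑ x : Fin (n-1) → Fin 2, ∑ l : Fin (n-1) → L,
            c0 * ((2:ℝ) ^ (n-2))⁻¹ * (pr w (fun ω => Λ ω = l) *
            (if (∑ j, (x j).val) % 2 = x₁.val
              then ((-1:ℝ))^((∑ j, (x j).val + x₁.val)/2) * ∏ j, e l j (x j) else 0)) :=
          Finset.sum_congr rfl (fun x _ => Finset.sum_congr rfl (fun l _ => hxy x l))
      _ = ∑ l : Fin (n-1) → L, ∑ x : Fin (n-1) → Fin 2,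
            c0 * ((2:ℝ) ^ (n-2))⁻¹ * (pr w (fun ω => Λ ω = l) *
            (if (∑ j, (x j).val) % 2 = x₁.val
              then ((-1:ℝ))^((∑ j, (x j).val + x₁.val)/2) * ∏ j, e l j (x j) else 0)) :=
          Finset.sum_comm
      _ = c0 * ((2:ℝ) ^ (n-2))⁻¹ * ∑ l, pr w (fun ω => Λ ω = l) * T l := by
          rw [Finset.mul_sum]
          apply Finset.sum_congr rfl
          intro l _
          rw [← Finset.mul_sum, ← Finset.mul_sum]
  have hΛ0 : ∀ l, 0 ≤ pr w (fun ω => Λ ω = l) := by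
    intro l
    rw [pr]
    exact Finset.sum_nonneg (fun ω _ => by split; exacts [hw ω, le_refl 0])
  have hΛ1 : ∑ l, pr w (fun ω => Λ ω = l) = 1 := by
    unfold pr
    rw [Finset.sum_comm, ← hsum]
    apply Finset.sum_congr rfl
    intro ω _
    rw [Finset.sum_eq_single (Λ ω)]
    · simp
    · intro l _ hne
      simp [Ne.symm hne]
    · intro h
      exact absurd (Finset.mem_univ _) h
  have hTb : ∀ l, |T l| ≤ Real.sqrt 2 ^ (n-1) := by
    intro l
    simp only [hT]
    exact MerminAux.key_bound _ x₁.val x₁.isLt (e l) (heb l)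
  have hDb : |D| ≤ ((2:ℝ) ^ (n-2))⁻¹ * Real.sqrt 2 ^ (n-1) := by
    rw [hDval]
    rw [abs_mul, abs_mul]
    have hc0abs : |c0| = 1 := by
      rw [hc0, abs_pow, abs_neg, abs_one, one_pow]
    rw [hc0abs, one_mul, abs_inv, abs_pow, abs_two]
    have hb2 : |∑ l, pr w (fun ω => Λ ω = l) * T l| ≤ Real.sqrt 2 ^ (n-1) := by
      calc |∑ l, pr w (fun ω => Λ ω = l) * T l|
          ≤ ∑ l, |pr w (fun ω => Λ ω = l) * T l| := Finset.abs_sum_le_sum_abs _ _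
        _ ≤ ∑ l, pr w (fun ω => Λ ω = l) * Real.sqrt 2 ^ (n-1) := by
            apply Finset.sum_le_sum; intro l _
            rw [abs_mul, abs_of_nonneg (hΛ0 l)]
            exact mul_le_mul_of_nonneg_left (hTb l) (hΛ0 l)
        _ = Real.sqrt 2 ^ (n-1) := by rw [← Finset.sum_mul, hΛ1, one_mul]
    exact mul_le_mul_of_nonneg_left hb2 (by positivity)
  have hfin : ((2:ℝ) ^ (n-2))⁻¹ * Real.sqrt 2 ^ (n-1) / 2
      = (2:ℝ) ^ (-((n:ℝ) - 1) / 2) := by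
    have h2m : ((2:ℝ) ^ (n-2)) * 2 = 2 ^ (n-1) := by
      rw [← pow_succ, hn2]
    have hstep1 : ((2:ℝ) ^ (n-2))⁻¹ * Real.sqrt 2 ^ (n-1) / 2
        = Real.sqrt 2 ^ (n-1) / 2 ^ (n-1) := by
      rw [← h2m]
      have hne : ((2:ℝ) ^ (n-2)) ≠ 0 := by positivity
      field_simp
    have hcast : (((n - 1 : ℕ) : ℝ)) = (n:ℝ) - 1 := by
      have h1 : 1 ≤ n := by omega
      push_cast [h1]
      ring
    have hstep2 : Real.sqrt 2 ^ (n-1) / 2 ^ (n-1) = (2:ℝ) ^ (-(((n-1:ℕ):ℝ))/2) := by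
      rw [Real.sqrt_eq_rpow]
      rw [← Real.rpow_natCast ((2:ℝ) ^ ((1:ℝ)/2)) (n-1), ← Real.rpow_natCast (2:ℝ) (n-1)]
      rw [← Real.rpow_mul (by norm_num : (0:ℝ) ≤ 2)]
      rw [← Real.rpow_sub (by norm_num : (0:ℝ) < 2)]
      congr 1
      ring
    rw [hstep1, hstep2, hcast]
  rw [hPD]
  calc |D / 2| = |D| / 2 := by rw [abs_div, abs_two]
    _ ≤ ((2:ℝ) ^ (n-2))⁻¹ * Real.sqrt 2 ^ (n-1) / 2 := by linarith [hDb]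
    _ = (2:ℝ) ^ (-((n:ℝ) - 1) / 2) := hfin
end
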